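/- arXiv:1912.08505 — 4 statements merged into one kernel-verified Lean document; each statement's English description precedes it below -/
import Mathlib

section
/- Let Q ∈ ℝ^{(m+p)×n} have orthonormal columns (QᵀQ = Iₙ). Let M ∈ ℝ^{m×k}, Ṽ, G̃ ∈ ℝ^{(m+p)×k}, and let B̲ ∈ ℝ^{k×k} be invertible. Suppose Q Qᵀ · [M; 0_{p×k}] = Ṽ B̲ + G̃, where [M; 0_{p×k}] denotes the (m+p)×k matrix obtained by stacking M on top of the p×k zero matrix. Set V = Qᵀ Ṽ. Then Ṽ − Q V = (Q Qᵀ − I_{m+p}) G̃ B̲⁻¹, and consequently ‖Ṽ − Q V‖ ≤ ‖G̃ B̲⁻¹‖. -/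
open Matrix

noncomputable def spec {α β : Type*} [Fintype α] [Fintype β] [DecidableEq β]
    (M : Matrix α β ℝ) : ℝ :=
  ‖LinearMap.toContinuousLinearMap (Matrix.toEuclideanLin M)‖

open scoped Matrix.Norms.L2Operator

lemma spec_eq {α β : Type*} [Fintype α] [Fintype β] [DecidableEq β]
    (M : Matrix α β ℝ) : spec M = ‖M‖ := (Matrix.l2_opNorm_def M).symm

/-- Lemma 3.1: the computed matrix Ṽ deviates from the column space of `Q`
by at most `‖G̃ B̲⁻¹‖`. -/
theorem stmt0 {m p n k : ℕ}
    (Q : Matrix (Fin m ⊕ Fin p) (Fin n) ℝ) (hQ : Qᵀ * Q = 1)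
    (M : Matrix (Fin m) (Fin k) ℝ)
    (Vt G : Matrix (Fin m ⊕ Fin p) (Fin k) ℝ)
    (B : Matrix (Fin k) (Fin k) ℝ) (hB : IsUnit B.det)
    (h : Q * Qᵀ * Matrix.fromRows M (0 : Matrix (Fin p) (Fin k) ℝ) = Vt * B + G)
    (V : Matrix (Fin n) (Fin k) ℝ) (hV : V = Qᵀ * Vt) :
    Vt - Q * V = (Q * Qᵀ - 1) * G * B⁻¹ ∧
      spec (Vt - Q * V) ≤ spec (G * B⁻¹) := by
  set F := Matrix.fromRows M (0 : Matrix (Fin p) (Fin k) ℝ) with hF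
  have hVt : Vt = (Q * Qᵀ * F - G) * B⁻¹ := by
    have h2 : Vt * B = Q * Qᵀ * F - G := by rw [h]; abel
    calc Vt = Vt * B * B⁻¹ := by rw [Matrix.mul_nonsing_inv_cancel_right _ _ hB]
    _ = (Q * Qᵀ * F - G) * B⁻¹ := by rw [h2]
  have key : Vt - Q * V = (Q * Qᵀ - 1) * G * B⁻¹ := by
    subst hV
    rw [hVt]
    have hAA : Q * Qᵀ * (Q * Qᵀ) = Q * Qᵀ := by
      rw [Matrix.mul_assoc Q Qᵀ (Q * Qᵀ), ← Matrix.mul_assoc Qᵀ Q Qᵀ, hQ,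
        Matrix.one_mul]
    have hProj : Q * Qᵀ * (Q * Qᵀ * F * B⁻¹) = Q * Qᵀ * F * B⁻¹ := by
      rw [← Matrix.mul_assoc, ← Matrix.mul_assoc, hAA]
    rw [← Matrix.mul_assoc Q Qᵀ, Matrix.sub_mul, Matrix.mul_sub, hProj,
      Matrix.sub_mul, Matrix.sub_mul, Matrix.one_mul, Matrix.mul_assoc (Q * Qᵀ) G B⁻¹]
    abel
  refine ⟨key, ?_⟩
  rw [key, spec_eq, spec_eq, Matrix.mul_assoc]
  calc ‖(Q * Qᵀ - 1) * (G * B⁻¹)‖ ≤ ‖Q * Qᵀ - 1‖ * ‖G * B⁻¹‖ :=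
        Matrix.l2_opNorm_mul _ _
    _ ≤ 1 * ‖G * B⁻¹‖ := by
        have hP : (Q * Qᵀ - 1)ᴴ * (Q * Qᵀ - 1) = -(Q * Qᵀ - 1) := by
          have hH : (Q * Qᵀ - 1 : Matrix (Fin m ⊕ Fin p) (Fin m ⊕ Fin p) ℝ)ᴴ
              = Q * Qᵀ - 1 := by
            simp [Matrix.conjTranspose_sub, Matrix.conjTranspose_mul]
          rw [hH, Matrix.sub_mul, Matrix.mul_sub, Matrix.mul_sub,
            Matrix.mul_assoc Q Qᵀ (Q * Qᵀ), ← Matrix.mul_assoc Qᵀ Q Qᵀ, hQ,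
            Matrix.one_mul, Matrix.one_mul, Matrix.mul_one, Matrix.mul_one]
          abel
        have hn : ‖Q * Qᵀ - 1‖ * ‖Q * Qᵀ - 1‖ = ‖Q * Qᵀ - 1‖ := by
          rw [← Matrix.l2_opNorm_conjTranspose_mul_self, hP, norm_neg]
        have h1 : ‖Q * Qᵀ - 1‖ ≤ 1 := by
          nlinarith [norm_nonneg (Q * Qᵀ - 1 : Matrix (Fin m ⊕ Fin p) (Fin m ⊕ Fin p) ℝ)]
        exact mul_le_mul_of_nonneg_right h1 (norm_nonneg _)
    _ = ‖G * B⁻¹‖ := one_mul _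
end

section
/- Let Q ∈ ℝ^{(m+p)×n} have orthonormal columns (QᵀQ = Iₙ), and write Q_A ∈ ℝ^{m×n} for the matrix of the first m rows of Q. Let M ∈ ℝ^{m×k}, Ṽ, G̃ ∈ ℝ^{(m+p)×k}, B̲ ∈ ℝ^{k×k} invertible with Q Qᵀ · [M; 0_{p×k}] = Ṽ B̲ + G̃, and set V = Qᵀ Ṽ. Further let U ∈ ℝ^{m×(k+1)}, B ∈ ℝ^{(k+1)×k}, F̃ ∈ ℝ^{m×k} satisfy (I_m, 0_{m×p}) Ṽ = U B + F̃ (i.e., the first m rows of Ṽ equal U B + F̃). Then Q_A V = U B + F, where F = F̃ + (I_m, 0_{m×p})(I_{m+p} − Q Qᵀ) G̃ B̲⁻¹, and ‖F‖ ≤ ‖F̃‖ + ‖G̃ B̲⁻¹‖. -/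
open Matrix

section aux

open scoped Matrix.Norms.L2Operator

set_option linter.unusedSectionVars false

variable {α β γ : Type*} [Fintype α] [Fintype β] [Fintype γ] [DecidableEq α] [DecidableEq β]
  [DecidableEq γ]

lemma spec_eq_norm (A : Matrix α β ℝ) : spec A = ‖A‖ := rfl

lemma spec_nonneg (A : Matrix α β ℝ) : 0 ≤ spec A := by
  rw [spec_eq_norm]; exact norm_nonneg _

lemma spec_add_le (A B : Matrix α β ℝ) : spec (A + B) ≤ spec A + spec B := by
  simp only [spec_eq_norm]; exact norm_add_le _ _

lemma spec_mul_le (A : Matrix α β ℝ) (B : Matrix β γ ℝ) : spec (A * B) ≤ spec A * spec B := by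
  simp only [spec_eq_norm]; exact Matrix.l2_opNorm_mul A B

lemma spec_transpose (A : Matrix α β ℝ) : spec Aᵀ = spec A := by
  simp only [spec_eq_norm]
  rw [← Matrix.conjTranspose_eq_transpose_of_trivial]
  exact Matrix.l2_opNorm_conjTranspose A

lemma spec_mul_transpose_self (A : Matrix α β ℝ) : spec (A * Aᵀ) = spec A * spec A := by
  have := Matrix.l2_opNorm_conjTranspose_mul_self (Aᴴ)
  simp only [Matrix.conjTranspose_conjTranspose] at this
  simp only [spec_eq_norm, Matrix.conjTranspose_eq_transpose_of_trivial] at *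
  rw [this]
  have ht : ‖Aᵀ‖ = ‖A‖ := by
    rw [← Matrix.conjTranspose_eq_transpose_of_trivial]
    exact Matrix.l2_opNorm_conjTranspose A
  rw [ht]

lemma spec_one_le : spec (1 : Matrix α α ℝ) ≤ 1 := by
  rw [spec_eq_norm, Matrix.cstar_norm_def, _root_.map_one]
  exact ContinuousLinearMap.norm_id_le

/-- The norm of the row-selection matrix is at most 1. -/
lemma spec_rowselect_le {p : Type*} [Fintype p] [DecidableEq p] :
    spec ((1 : Matrix (α ⊕ p) (α ⊕ p) ℝ).submatrix Sum.inl id) ≤ 1 := by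
  set P := (1 : Matrix (α ⊕ p) (α ⊕ p) ℝ).submatrix Sum.inl id with hP
  have hPPt : P * Pᵀ = 1 := by
    ext i j
    simp [hP, Matrix.mul_apply, Matrix.one_apply, Sum.inl.injEq]
  have h1 : spec (P * Pᵀ) = spec P * spec P := spec_mul_transpose_self P
  rw [hPPt] at h1
  have h2 : spec (1 : Matrix α α ℝ) ≤ 1 := spec_one_le
  nlinarith [spec_nonneg P]

/-- Selecting rows does not increase the spectral norm. -/
lemma spec_submatrix_inl_le {p : Type*} [Fintype p] [DecidableEq p]
    (A : Matrix (α ⊕ p) β ℝ) : spec (A.submatrix Sum.inl id) ≤ spec A := by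
  set P := (1 : Matrix (α ⊕ p) (α ⊕ p) ℝ).submatrix Sum.inl id with hP
  have key : A.submatrix Sum.inl id = P * A := by
    ext i j
    simp [hP, Matrix.mul_apply, Matrix.one_apply]
  rw [key]
  calc spec (P * A) ≤ spec P * spec A := spec_mul_le _ _
    _ ≤ 1 * spec A := by
        have := spec_rowselect_le (α := α) (p := p)
        have := spec_nonneg A
        nlinarith [spec_nonneg P]
    _ = spec A := one_mul _

/-- Norm of the complementary orthogonal projection is at most 1. -/
lemma spec_proj_le {n : Type*} [Fintype n] [DecidableEq n]
    (Q : Matrix α n ℝ) (hQ : Qᵀ * Q = 1) : spec (1 - Q * Qᵀ) ≤ 1 := by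
  set S := (1 : Matrix α α ℝ) - Q * Qᵀ with hS
  have hidem : S * S = S := by
    have hproj : Q * Qᵀ * (Q * Qᵀ) = Q * Qᵀ := by
      rw [Matrix.mul_assoc Q Qᵀ (Q * Qᵀ), ← Matrix.mul_assoc Qᵀ Q Qᵀ, hQ, Matrix.one_mul]
    rw [hS, Matrix.sub_mul, Matrix.one_mul, Matrix.mul_sub, Matrix.mul_one, hproj]
    abel
  have hsymm : Sᵀ = S := by
    rw [hS]
    simp [Matrix.transpose_sub, Matrix.transpose_mul]
  have h1 : spec (S * Sᵀ) = spec S * spec S := spec_mul_transpose_self S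
  rw [hsymm, hidem] at h1
  nlinarith [spec_nonneg S]

end aux

/-- First relation of Theorem 3.1: in finite precision arithmetic the computation of
`U`, `V`, `B` in the joint bidiagonalization process gives a Lanczos lower
bidiagonalization relation for `Q_A` (the first `m` rows of `Q`) with an error term `F`
bounded by `‖F̃‖ + ‖G̃ B̲⁻¹‖`. -/
theorem stmt1 {m p n k : ℕ}
    (Q : Matrix (Fin m ⊕ Fin p) (Fin n) ℝ) (hQ : Qᵀ * Q = 1)
    (QA : Matrix (Fin m) (Fin n) ℝ) (hQA : QA = Q.submatrix Sum.inl id)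
    (M : Matrix (Fin m) (Fin k) ℝ)
    (Vt G : Matrix (Fin m ⊕ Fin p) (Fin k) ℝ)
    (Bu : Matrix (Fin k) (Fin k) ℝ) (hBu : IsUnit Bu.det)
    (h : Q * Qᵀ * Matrix.fromRows M (0 : Matrix (Fin p) (Fin k) ℝ) = Vt * Bu + G)
    (V : Matrix (Fin n) (Fin k) ℝ) (hV : V = Qᵀ * Vt)
    (U : Matrix (Fin m) (Fin (k + 1)) ℝ)
    (B : Matrix (Fin (k + 1)) (Fin k) ℝ)
    (Ft : Matrix (Fin m) (Fin k) ℝ)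
    (h2 : Vt.submatrix Sum.inl id = U * B + Ft)
    (F : Matrix (Fin m) (Fin k) ℝ)
    (hF : F = Ft + ((1 - Q * Qᵀ) * G * Bu⁻¹).submatrix Sum.inl id) :
    QA * V = U * B + F ∧ spec F ≤ spec Ft + spec (G * Bu⁻¹) := by
  have hBu1 : Bu * Bu⁻¹ = 1 := Matrix.mul_nonsing_inv Bu hBu
  -- the key projection identity
  have hPP : Q * Qᵀ * (Q * Qᵀ * Matrix.fromRows M (0 : Matrix (Fin p) (Fin k) ℝ))
      = Q * Qᵀ * Matrix.fromRows M (0 : Matrix (Fin p) (Fin k) ℝ) := by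
    have hproj : Q * Qᵀ * (Q * Qᵀ) = Q * Qᵀ := by
      rw [Matrix.mul_assoc Q Qᵀ (Q * Qᵀ), ← Matrix.mul_assoc Qᵀ Q Qᵀ, hQ, Matrix.one_mul]
    rw [← Matrix.mul_assoc, hproj]
  have h3 : Vt * Bu = Q * Qᵀ * Matrix.fromRows M (0 : Matrix (Fin p) (Fin k) ℝ) - G :=
    eq_sub_of_add_eq h.symm
  have h4 : Q * Qᵀ * (Vt * Bu) = Vt * Bu + G - Q * Qᵀ * G := by
    rw [h3, Matrix.mul_sub, hPP, h]
    abel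
  have key : Q * Qᵀ * Vt = Vt + (1 - Q * Qᵀ) * G * Bu⁻¹ := by
    have e1 : Q * Qᵀ * Vt = (Q * Qᵀ * (Vt * Bu)) * Bu⁻¹ := by
      rw [Matrix.mul_assoc (Q * Qᵀ) (Vt * Bu) Bu⁻¹, Matrix.mul_assoc Vt Bu Bu⁻¹, hBu1,
        Matrix.mul_one]
    rw [e1, h4, Matrix.sub_mul, Matrix.add_mul, Matrix.mul_assoc Vt Bu Bu⁻¹, hBu1,
      Matrix.mul_one, Matrix.sub_mul, Matrix.sub_mul, Matrix.one_mul]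
    abel
  constructor
  · -- the matrix identity
    have hsub : ∀ X : Matrix (Fin n) (Fin k) ℝ,
        Q.submatrix Sum.inl id * X = (Q * X).submatrix Sum.inl id := by
      intro X; ext i j; simp [Matrix.mul_apply]
    rw [hQA, hV, hsub, ← Matrix.mul_assoc, key, hF, Matrix.submatrix_add, Pi.add_apply, Pi.add_apply, h2, add_assoc]
  · -- the norm bound
    rw [hF, Matrix.mul_assoc]
    have hA := spec_add_le Ft (((1 - Q * Qᵀ) * (G * Bu⁻¹)).submatrix Sum.inl id)
    have hB := spec_submatrix_inl_le ((1 - Q * Qᵀ) * (G * Bu⁻¹))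
    have h6 := spec_mul_le (1 - Q * Qᵀ) (G * Bu⁻¹)
    have h7 := spec_proj_le Q hQ
    have h8 := spec_nonneg (G * Bu⁻¹)
    have h9 := spec_nonneg ((1 : Matrix (Fin m ⊕ Fin p) (Fin m ⊕ Fin p) ℝ) - Q * Qᵀ)
    nlinarith
end

section
/- Let Q ∈ ℝ^{(m+p)×n} have orthonormal columns (QᵀQ = Iₙ); write Q_A for the first m rows of Q and Q_L for the last p rows, so that Q_Aᵀ Q_A + Q_Lᵀ Q_L = Iₙ. Let V ∈ ℝ^{n×k}, U ∈ ℝ^{m×(k+1)}, B ∈ ℝ^{(k+1)×k}, F ∈ ℝ^{m×k}, G ∈ ℝ^{n×(k+1)}, v ∈ ℝⁿ, α, β ∈ ℝ, and assume: the last row of B equals β e_kᵀ; Q_A V = U B + F; and Q_Aᵀ U = V Bᵀ + α v e_{k+1}ᵀ + G. Let P = diag(1, −1, …, (−1)^{k−1}) ∈ ℝ^{k×k} and V̂ = V P. Let Û ∈ ℝ^{p×k}, F̂ ∈ ℝ^{p×k}, and B̂ ∈ ℝ^{k×k} invertible with last row α̂ e_kᵀ (α̂ ≠ 0), and assume Q_L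 V̂ = Û B̂ + F̂. Assume further that Bᵀ B + P B̂ᵀ B̂ P = I_k + E for some E ∈ ℝ^{k×k}, and that α β = α̂ β̂ + γ for scalars β̂, γ ∈ ℝ. Set v̂ = (−1)^k v. Then Q_Lᵀ Û = V̂ B̂ᵀ + β̂ · v̂ e_kᵀ + Ĝ, where Ĝ = (γ/α̂) · v̂ e_kᵀ − [(G B + Q_Aᵀ F + V E) P + Q_Lᵀ F̂] B̂⁻¹. -/
open Matrix

private lemma vmv_mul {n k l : ℕ} (v : Fin n → ℝ) (w : Fin k → ℝ) (M : Matrix (Fin k) (Fin l) ℝ) :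
    Matrix.vecMulVec v w * M = Matrix.vecMulVec v (Matrix.vecMul w M) := by
  ext i j
  simp [Matrix.mul_apply, Matrix.vecMulVec_apply, Matrix.vecMul, dotProduct,
    Finset.mul_sum, mul_assoc]

private lemma single_vecMul' {k l : ℕ} (i : Fin k) (M : Matrix (Fin k) (Fin l) ℝ) :
    Matrix.vecMul (Pi.single i 1) M = M i := by
  funext j; simp [Matrix.vecMul, dotProduct, Pi.single_apply, ite_mul]

private lemma vmv_smul_right {n k : ℕ} (c : ℝ) (v : Fin n → ℝ) (w : Fin k → ℝ) :
    Matrix.vecMulVec v (c • w) = c • Matrix.vecMulVec v w := by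
  ext i j; simp [Matrix.vecMulVec_apply]; ring

private lemma vmv_smul_left {n k : ℕ} (c : ℝ) (v : Fin n → ℝ) (w : Fin k → ℝ) :
    Matrix.vecMulVec (c • v) w = c • Matrix.vecMulVec v w := by
  ext i j; simp [Matrix.vecMulVec_apply]; ring

/-- Theorem 3.3 (exact-identity form): in finite precision arithmetic, the process of
computing `Û`, `V̂ = V P`, `B̂` in the joint bidiagonalization is equivalent to the
upper Lanczos bidiagonalization of `Q_L` (the last `p` rows of `Q`) up to the explicit
error matrix `Ĝ`.  (Here the NL `k` is `K+1 ≥ 1`, so `v̂ = (−1)^k v = (−1)^{K+1} v`,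
`e_k = Pi.single (Fin.last K) 1` and `e_{k+1} = Pi.single (Fin.last (K+1)) 1`.) -/
theorem stmt9 {m p n K : ℕ}
    (Q : Matrix (Fin m ⊕ Fin p) (Fin n) ℝ) (hQ : Qᵀ * Q = 1)
    (QA : Matrix (Fin m) (Fin n) ℝ) (hQA : QA = Q.submatrix Sum.inl id)
    (QL : Matrix (Fin p) (Fin n) ℝ) (hQL : QL = Q.submatrix Sum.inr id)
    (V : Matrix (Fin n) (Fin (K + 1)) ℝ)
    (U : Matrix (Fin m) (Fin (K + 2)) ℝ)
    (B : Matrix (Fin (K + 2)) (Fin (K + 1)) ℝ)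
    (F : Matrix (Fin m) (Fin (K + 1)) ℝ)
    (G : Matrix (Fin n) (Fin (K + 2)) ℝ)
    (v : Fin n → ℝ) (α β : ℝ)
    (hBlast : ∀ j : Fin (K + 1), B (Fin.last (K + 1)) j = if j = Fin.last K then β else 0)
    (h1 : QA * V = U * B + F)
    (h2 : QAᵀ * U = V * Bᵀ + α • Matrix.vecMulVec v (Pi.single (Fin.last (K + 1)) 1) + G)
    (P : Matrix (Fin (K + 1)) (Fin (K + 1)) ℝ)
    (hP : P = Matrix.diagonal fun i : Fin (K + 1) => (-1 : ℝ) ^ (i : ℕ))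
    (Uh Fh : Matrix (Fin p) (Fin (K + 1)) ℝ)
    (Bh : Matrix (Fin (K + 1)) (Fin (K + 1)) ℝ) (hBh : IsUnit Bh.det)
    (αh : ℝ) (hαh : αh ≠ 0)
    (hBhlast : ∀ j : Fin (K + 1), Bh (Fin.last K) j = if j = Fin.last K then αh else 0)
    (h3 : QL * (V * P) = Uh * Bh + Fh)
    (E : Matrix (Fin (K + 1)) (Fin (K + 1)) ℝ)
    (h4 : Bᵀ * B + P * Bhᵀ * Bh * P = 1 + E)
    (βh γ : ℝ) (h5 : α * β = αh * βh + γ)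
    (vh : Fin n → ℝ) (hvh : vh = (-1 : ℝ) ^ (K + 1) • v)
    (Gh : Matrix (Fin n) (Fin (K + 1)) ℝ)
    (hGh : Gh = (γ / αh) • Matrix.vecMulVec vh (Pi.single (Fin.last K) 1)
      - ((G * B + QAᵀ * F + V * E) * P + QLᵀ * Fh) * Bh⁻¹) :
    QLᵀ * Uh = (V * P) * Bhᵀ + βh • Matrix.vecMulVec vh (Pi.single (Fin.last K) 1) + Gh := by
  set e0 : Fin (K + 1) → ℝ := Pi.single (Fin.last K) 1 with he0
  set e1 : Fin (K + 2) → ℝ := Pi.single (Fin.last (K + 1)) 1 with he1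
  set W0 : Matrix (Fin n) (Fin (K + 1)) ℝ := Matrix.vecMulVec v e0 with hW0
  set W0h : Matrix (Fin n) (Fin (K + 1)) ℝ := Matrix.vecMulVec vh e0 with hW0h
  -- basic facts
  have hW0hW0 : W0h = ((-1 : ℝ) ^ (K + 1)) • W0 := by
    rw [hW0h, hvh, vmv_smul_left, hW0]
  have hrowB : Matrix.vecMul e1 B = β • e0 := by
    rw [he1, single_vecMul']
    funext j
    rw [hBlast j]
    by_cases hj : j = Fin.last K <;> simp [hj, he0, Pi.single_apply]
  have hrowBh : Matrix.vecMul e0 Bh = αh • e0 := by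
    rw [he0, single_vecMul']
    funext j
    rw [hBhlast j]
    by_cases hj : j = Fin.last K <;> simp [hj, Pi.single_apply]
  have hW1B : Matrix.vecMulVec v e1 * B = β • W0 := by
    rw [vmv_mul, hrowB, vmv_smul_right, hW0]
  have hW0hBh : W0h * Bh = αh • W0h := by
    rw [hW0h, vmv_mul, hrowBh, vmv_smul_right]
  have hPP : P * P = 1 := by
    rw [hP, Matrix.diagonal_mul_diagonal]
    have : (fun i : Fin (K + 1) => (-1 : ℝ) ^ (i : ℕ) * (-1 : ℝ) ^ (i : ℕ)) = fun _ => 1 := by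
      funext i; rw [← mul_pow]; norm_num
    rw [this, Matrix.diagonal_one]
  have hW0P : W0 * P = ((-1 : ℝ) ^ K) • W0 := by
    rw [hW0, hP, vmv_mul]
    rw [show Matrix.vecMul e0 (Matrix.diagonal fun i : Fin (K + 1) => (-1 : ℝ) ^ (i : ℕ))
        = ((-1 : ℝ) ^ K) • e0 from ?_, vmv_smul_right]
    funext j
    rw [Matrix.vecMul_diagonal]
    by_cases hj : j = Fin.last K <;> simp [hj, he0, Pi.single_apply, Fin.val_last]
  have hQQ : QAᵀ * QA + QLᵀ * QL = 1 := by
    rw [hQA, hQL, ← hQ]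
    ext i j
    simp [Matrix.mul_apply, Matrix.transpose_apply, Fintype.sum_sum_type, Matrix.submatrix_apply]
  have hQLQL : QLᵀ * QL = 1 - QAᵀ * QA := by
    rw [← hQQ]; abel
  have hBB : Bᵀ * B = 1 + E - P * Bhᵀ * Bh * P := by
    rw [← h4]; abel
  -- key computation of QAᵀ * (QA * V)
  have key : QAᵀ * (QA * V)
      = V + V * E - V * P * Bhᵀ * Bh * P + (α * β) • W0 + (G * B + QAᵀ * F) := by
    rw [h1, Matrix.mul_add, ← Matrix.mul_assoc, h2, Matrix.add_mul, Matrix.add_mul,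
      Matrix.smul_mul, hW1B, smul_smul, Matrix.mul_assoc V Bᵀ B, hBB]
    rw [Matrix.mul_sub, Matrix.mul_add, Matrix.mul_one]
    rw [show V * (P * Bhᵀ * Bh * P) = V * P * Bhᵀ * Bh * P by
      simp only [Matrix.mul_assoc]]
    abel
  -- canonical form
  have l1 : Uh * Bh = QL * (V * P) - Fh := eq_sub_iff_add_eq.2 h3.symm
  have hC : QLᵀ * Uh * Bh
      = V * P * Bhᵀ * Bh + ((α * β) * (-1 : ℝ) ^ (K + 1)) • W0
        - ((G * B + QAᵀ * F + V * E) * P + QLᵀ * Fh) := by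
    calc QLᵀ * Uh * Bh = QLᵀ * (QL * (V * P)) - QLᵀ * Fh := by
          rw [Matrix.mul_assoc, l1, Matrix.mul_sub]
      _ = V * P - QAᵀ * (QA * V) * P - QLᵀ * Fh := by
          rw [← Matrix.mul_assoc QLᵀ QL (V * P), hQLQL, Matrix.sub_mul, Matrix.one_mul,
            Matrix.mul_assoc QAᵀ QA (V * P), ← Matrix.mul_assoc QA V P,
            ← Matrix.mul_assoc QAᵀ (QA * V) P]
      _ = _ := by
          rw [key]
          simp only [Matrix.add_mul, Matrix.sub_mul, Matrix.smul_mul, hW0P, smul_smul]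
          rw [Matrix.mul_assoc (V * P * Bhᵀ * Bh) P P, hPP, Matrix.mul_one]
          match_scalars <;> ring
  have hRC : ((V * P) * Bhᵀ + βh • W0h + Gh) * Bh
      = V * P * Bhᵀ * Bh + ((α * β) * (-1 : ℝ) ^ (K + 1)) • W0
        - ((G * B + QAᵀ * F + V * E) * P + QLᵀ * Fh) := by
    rw [hGh, Matrix.add_mul, Matrix.add_mul, Matrix.sub_mul, Matrix.smul_mul, hW0hBh,
      Matrix.smul_mul, hW0hBh, Matrix.nonsing_inv_mul_cancel_right _ _ hBh,
      smul_smul, smul_smul, div_mul_cancel₀ γ hαh, hW0hW0, smul_smul, smul_smul]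
    match_scalars <;>
      first
        | ring1
        | linear_combination ((-1 : ℝ) ^ K) * h5
  have hmul : QLᵀ * Uh * Bh = ((V * P) * Bhᵀ + βh • W0h + Gh) * Bh := hC.trans hRC.symm
  have := congrArg (fun X => X * Bh⁻¹) hmul
  simpa [Matrix.mul_nonsing_inv_cancel_right _ _ hBh] using this
end

section
/- Let Ṽ ∈ ℝ^{(m+p)×k}, U ∈ ℝ^{m×(k+1)}, B ∈ ℝ^{(k+1)×k}, F̃ ∈ ℝ^{m×k}, Û ∈ ℝ^{p×k}, B̂ ∈ ℝ^{k×k} invertible, F̄ ∈ ℝ^{p×k}, E ∈ ℝ^{k×k}, and let P = diag(1, −1, …, (−1)^{k−1}) ∈ ℝ^{k×k}. Assume: (i) the first m rows of Ṽ equal U B + F̃; (ii) (0_{p×m}, I_p) Ṽ P = Û B̂ + F̄ (i.e., the last p rows of Ṽ, multiplied on the right by P, equal Û B̂ + F̄); and (iii) Bᵀ B + P B̂ᵀ B̂ P = I_k + E. Set B̄ = B̂ P and E₃ = Bᵀ Uᵀ F̃ + B̄ᵀ Ûᵀ F̄ P + F̃ᵀ U B + P F̄ᵀ Û B̄ + F̃ᵀ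 F̃ + P F̄ᵀ F̄ P. Then I_k − Ûᵀ Û = B̄⁻ᵀ [ (I_k − Ṽᵀ Ṽ) − Bᵀ (I_{k+1} − Uᵀ U) B + E + E₃ ] B̄⁻¹, and consequently ‖I_k − Ûᵀ Û‖ ≤ ‖B̂⁻¹‖² ( ‖I_k − Ṽᵀ Ṽ‖ + ‖B‖² ‖I_{k+1} − Uᵀ U‖ + ‖E‖ + ‖E₃‖ ). -/
open Matrix

/-!
Splitting `ṼᵀṼ` along the two row blocks of `Ṽ` and substituting (i) and (ii) expands
`B̄ᵀ (I − ÛᵀÛ) B̄` into `(I − ṼᵀṼ) − Bᵀ (I − UᵀU) B + E₃` plus `BᵀB + B̄ᵀB̄ − I`, which is `E`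
by (iii), `P` being a symmetric involution. Conjugating by `B̄⁻¹` gives the identity. The bound
then follows from submultiplicativity of the spectral norm together with `‖Xᵀ‖ = ‖X‖` and
`‖B̄⁻¹‖ = ‖P B̂⁻¹‖ = ‖B̂⁻¹‖`, the last because `P` is orthogonal.
-/

section Algebra

variable {R : Type*} [CommRing R] {m n p k : Type*} [Fintype m] [Fintype p]

theorem Matrix.transpose_mul_self_eq_add_submatrix (V : Matrix (m ⊕ p) k R) :
    Vᵀ * V = (V.submatrix Sum.inl id)ᵀ * V.submatrix Sum.inl id
      + (V.submatrix Sum.inr id)ᵀ * V.submatrix Sum.inr id := by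
  conv_lhs => rw [← fromRows_toRows V, transpose_fromRows, fromCols_mul_fromRows]
  rfl

variable [Fintype n] [Fintype k]

theorem Matrix.diagonal_mul_self_eq_one [DecidableEq k] {d : k → R} (hd : ∀ i, d i * d i = 1) :
    diagonal d * diagonal d = 1 := by
  rw [diagonal_mul_diagonal, ← diagonal_one]
  exact congrArg diagonal (funext hd)

theorem Matrix.eq_transpose_inv_mul_mul_inv [DecidableEq k] {A X M : Matrix k k R}
    (hA : IsUnit A.det) (h : Aᵀ * X * A = M) : X = A⁻¹ᵀ * M * A⁻¹ := by
  have hAt : IsUnit Aᵀ.det := by rwa [det_transpose]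
  rw [← h, transpose_nonsing_inv, Matrix.mul_assoc Aᵀ, nonsing_inv_mul_cancel_left _ _ hAt,
    mul_nonsing_inv_cancel_right _ _ hA]

theorem transpose_mul_one_sub_gram_mul_eq [DecidableEq k] [DecidableEq n]
    (V : Matrix (m ⊕ p) k R) (U : Matrix m n R) (B : Matrix n k R) (F : Matrix m k R)
    (Uh Fb : Matrix p k R) (Bh E P : Matrix k k R) (hPP : P * P = 1) (hPt : Pᵀ = P)
    (h1 : V.submatrix Sum.inl id = U * B + F) (h2 : V.submatrix Sum.inr id * P = Uh * Bh + Fb)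
    (h3 : Bᵀ * B + P * Bhᵀ * Bh * P = 1 + E) :
    (Bh * P)ᵀ * (1 - Uhᵀ * Uh) * (Bh * P)
      = (1 - Vᵀ * V) - Bᵀ * (1 - Uᵀ * U) * B + E
        + (Bᵀ * Uᵀ * F + (Bh * P)ᵀ * Uhᵀ * Fb * P + Fᵀ * U * B + P * Fbᵀ * Uh * (Bh * P)
          + Fᵀ * F + P * Fbᵀ * Fb * P) := by
  have hV₂ : V.submatrix Sum.inr id = (Uh * Bh + Fb) * P := by
    rw [← h2, Matrix.mul_assoc, hPP, Matrix.mul_one]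
  have h3' : P * (Bhᵀ * (Bh * P)) = 1 + E - Bᵀ * B := by
    rw [← h3]; simp only [Matrix.mul_assoc]; abel
  rw [transpose_mul_self_eq_add_submatrix, h1, hV₂]
  simp only [transpose_mul, transpose_add, hPt, Matrix.mul_add, Matrix.add_mul, Matrix.mul_sub,
    Matrix.sub_mul, Matrix.mul_one, Matrix.mul_assoc, h3']
  abel

end Algebra

section SpectralNorm

open scoped Matrix.Norms.L2Operator

variable {l m n : Type*} [Fintype l] [Fintype m] [Fintype n] [DecidableEq n]

theorem spec_eq_norm_s10 (M : Matrix m n ℝ) : spec M = ‖M‖ := rfl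

theorem Matrix.l2_opNorm_transpose [DecidableEq m] (A : Matrix m n ℝ) : ‖Aᵀ‖ = ‖A‖ := by
  simpa only [conjTranspose_eq_transpose_of_trivial] using l2_opNorm_conjTranspose A

theorem Matrix.l2_opNorm_mul_of_transpose_mul_self_eq_one [DecidableEq m] {Q : Matrix l m ℝ}
    (hQ : Qᵀ * Q = 1) (A : Matrix m n ℝ) : ‖Q * A‖ = ‖A‖ := by
  have hQ' : Qᴴ * Q = 1 := by rwa [conjTranspose_eq_transpose_of_trivial]
  have hsq : ‖Q * A‖ * ‖Q * A‖ = ‖A‖ * ‖A‖ := by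
    rw [← l2_opNorm_conjTranspose_mul_self, ← l2_opNorm_conjTranspose_mul_self, conjTranspose_mul,
      Matrix.mul_assoc, ← Matrix.mul_assoc Qᴴ, hQ', Matrix.one_mul]
  exact (mul_self_inj (norm_nonneg _) (norm_nonneg _)).mp hsq

theorem Matrix.l2_opNorm_transpose_mul_mul_le [DecidableEq m] (A : Matrix m n ℝ)
    (M : Matrix m m ℝ) : ‖Aᵀ * M * A‖ ≤ ‖A‖ ^ 2 * ‖M‖ :=
  calc ‖Aᵀ * M * A‖ ≤ ‖Aᵀ‖ * ‖M‖ * ‖A‖ :=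
        (l2_opNorm_mul _ _).trans (by gcongr; exact l2_opNorm_mul _ _)
    _ = ‖A‖ ^ 2 * ‖M‖ := by rw [l2_opNorm_transpose]; ring

end SpectralNorm

open scoped Matrix.Norms.L2Operator in
/-- Theorem 3.4: the orthogonality level `‖I − Ûᵀ Û‖` of the computed Lanczos
vectors `Û` is bounded in terms of the orthogonality levels of `U` and `Ṽ` and
the quantity `‖B̂⁻¹‖`. -/
theorem stmt10 {m p k : ℕ}
    (Vt : Matrix (Fin m ⊕ Fin p) (Fin k) ℝ)
    (U : Matrix (Fin m) (Fin (k + 1)) ℝ)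
    (B : Matrix (Fin (k + 1)) (Fin k) ℝ)
    (Ft : Matrix (Fin m) (Fin k) ℝ)
    (Uh : Matrix (Fin p) (Fin k) ℝ)
    (Bh : Matrix (Fin k) (Fin k) ℝ) (hBh : IsUnit Bh.det)
    (Fb : Matrix (Fin p) (Fin k) ℝ)
    (E : Matrix (Fin k) (Fin k) ℝ)
    (P : Matrix (Fin k) (Fin k) ℝ)
    (hP : P = Matrix.diagonal fun i : Fin k => (-1 : ℝ) ^ (i : ℕ))
    (h1 : Vt.submatrix Sum.inl id = U * B + Ft)
    (h2 : Vt.submatrix Sum.inr id * P = Uh * Bh + Fb)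
    (h3 : Bᵀ * B + P * Bhᵀ * Bh * P = 1 + E)
    (Bbar : Matrix (Fin k) (Fin k) ℝ) (hBbar : Bbar = Bh * P)
    (E3 : Matrix (Fin k) (Fin k) ℝ)
    (hE3 : E3 = Bᵀ * Uᵀ * Ft + Bbarᵀ * Uhᵀ * Fb * P + Ftᵀ * U * B + P * Fbᵀ * Uh * Bbar
      + Ftᵀ * Ft + P * Fbᵀ * Fb * P) :
    1 - Uhᵀ * Uh
      = (Bbar⁻¹)ᵀ * ((1 - Vtᵀ * Vt) - Bᵀ * (1 - Uᵀ * U) * B + E + E3) * Bbar⁻¹ ∧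
    spec (1 - Uhᵀ * Uh) ≤ spec Bh⁻¹ ^ 2 *
      (spec (1 - Vtᵀ * Vt) + spec B ^ 2 * spec (1 - Uᵀ * U) + spec E + spec E3) := by
  have hPP : P * P = 1 :=
    hP ▸ diagonal_mul_self_eq_one fun i => by rw [← mul_pow, neg_one_mul, neg_neg, one_pow]
  have hPt : Pᵀ = P := hP ▸ diagonal_transpose _
  have hBbar_det : IsUnit Bbar.det := by
    rw [hBbar, det_mul]; exact hBh.mul (isUnit_det_of_right_inverse hPP)
  set M := (1 - Vtᵀ * Vt) - Bᵀ * (1 - Uᵀ * U) * B + E + E3 with hM_def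
  have identity : 1 - Uhᵀ * Uh = Bbar⁻¹ᵀ * M * Bbar⁻¹ :=
    eq_transpose_inv_mul_mul_inv hBbar_det <| by
      rw [hM_def, hE3, hBbar]
      exact transpose_mul_one_sub_gram_mul_eq Vt U B Ft Uh Fb Bh E P hPP hPt h1 h2 h3
  refine ⟨identity, ?_⟩
  have hBbar_inv : ‖Bbar⁻¹‖ = ‖Bh⁻¹‖ := by
    rw [hBbar, Matrix.mul_inv_rev, inv_eq_left_inv hPP,
      l2_opNorm_mul_of_transpose_mul_self_eq_one (by rw [hPt, hPP])]
  have hM : ‖M‖ ≤ ‖1 - Vtᵀ * Vt‖ + ‖B‖ ^ 2 * ‖1 - Uᵀ * U‖ + ‖E‖ + ‖E3‖ := by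
    have := l2_opNorm_transpose_mul_mul_le B (1 - Uᵀ * U)
    have := norm_sub_le (1 - Vtᵀ * Vt) (Bᵀ * (1 - Uᵀ * U) * B)
    have := norm_add_le ((1 - Vtᵀ * Vt) - Bᵀ * (1 - Uᵀ * U) * B) E
    have := norm_add_le ((1 - Vtᵀ * Vt) - Bᵀ * (1 - Uᵀ * U) * B + E) E3
    linarith
  simp only [spec_eq_norm_s10]
  calc ‖1 - Uhᵀ * Uh‖ = ‖Bbar⁻¹ᵀ * M * Bbar⁻¹‖ := by rw [identity]
    _ ≤ ‖Bbar⁻¹‖ ^ 2 * ‖M‖ := l2_opNorm_transpose_mul_mul_le _ _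
    _ ≤ _ := by rw [hBbar_inv]; gcongr
end
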